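/- Let ν be the normalized Lebesgue (Haar) probability measure on the circle S¹ = ℝ/2πℤ, and let A : S¹ × S¹ → ℝ be Hölder continuous. Let λ > 0 and a strictly positive continuous ψ : S¹ → ℝ satisfy ∫ e^{A(x,y)} ψ(x) dν(x) = λ ψ(y) for all y, and set Ā(x,y) = A(x,y) + log ψ(x) − log ψ(y) − log λ, so that ∫ e^{Ā(x,y)} dν(x) = 1 for all y. Let m be the unique Borel probability measure on (S¹)^ℕ fixed by the dual Ruelle operator of the potential x ↦ Ā(x₀, x₁). Then for every r ∈ ℕ, every continuous f : (S¹)^{r+1} → ℝ, and every boundary condition σ' = (σ'₀, σ'₁, …) ∈ (S¹)^ℕ, the finite-volume DLR expectations converge: lim_{n→∞} ∫_{(S¹)^n} f(τ₀, …, τ_r) · exp( Σ_{k=0}^{n−2} Ā(τ_k, τ_{k+1}) + Ā(τ_{n−1}, σ'_n) ) dν(τ₀)⋯dν(τ_{n−1}) = ∫ f(x₀, …, x_r) dm(x). In particular the limit does not depend on the boundary condition σ'. -/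

import Mathlib

/-!
After normalisation, `k(x, y) = exp Ā(x, y)` is a continuous, strictly positive Markov kernel on
the compact circle, so `k ≥ δ > 0` and the associated operator contracts oscillations by the
factor `1 - δ` (Doeblin). With `g(x) = f(x₀, …, x_r)`, the finite-volume expectation on
`n + r + 1` sites with boundary value `b` is `L^{n+r+1} g` at any configuration starting with `b`.
Since `L^{r+1} g` depends on `x₀` only, and on such functions `L` acts as the kernel operator, these
expectations become uniformly close to a constant; that constant is `∫ g dm` because `m` is
`L*`-invariant.
-/

open MeasureTheory Filter Topology
open Fin.NatCast

noncomputable section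

instance : Fact (0 < 2 * Real.pi) := ⟨by positivity⟩

/-- The circle `M = ℝ/2πℤ` with arc-length metric. -/
abbrev Circ : Type := AddCircle (2 * Real.pi)

/-- The normalized Haar (Lebesgue) probability measure on the circle. -/
def haarC : Measure Circ := AddCircle.haarAddCircle

/-- The Bernoulli space `𝓑 = M^ℕ`. -/
abbrev Bs : Type := ℕ → Circ

/-- The left shift `σ`. -/
def shift (x : Bs) : Bs := fun n => x (n + 1)

/-- Prepending a symbol: `cons a x = ax = (a, x₀, x₁, …)`. -/
def cons (a : Circ) (x : Bs) : Bs := fun n =>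
  match n with
  | 0 => a
  | k + 1 => x k

/-- The metric `d(x,y) = Σ_k 2^{-k} d_M(x_k, y_k)` on `𝓑`. -/
def dB (x y : Bs) : ℝ := ∑' k : ℕ, (1 / 2 : ℝ) ^ k * dist (x k) (y k)

/-- `A` is α-Hölder with constant `H` for the metric `dB`. -/
def IsHolderB (α H : ℝ) (A : Bs → ℝ) : Prop := ∀ x y, |A x - A y| ≤ H * dB x y ^ α

/-- The Ruelle operator `L_A ψ (x) = ∫_M e^{A(ax)} ψ(ax) da`. -/
def Ruelle (A : Bs → ℝ) (ψ : Bs → ℝ) : Bs → ℝ :=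
  fun x => ∫ a, Real.exp (A (cons a x)) * ψ (cons a x) ∂haarC

/-- `m` is a fixed point of the dual Ruelle operator `L_A^*`. -/
def FixedDual (A : Bs → ℝ) (m : Measure Bs) : Prop :=
  ∀ ψ : Bs → ℝ, Continuous ψ → (∃ C, ∀ x, |ψ x| ≤ C) →
    ∫ x, Ruelle A ψ x ∂m = ∫ x, ψ x ∂m

/-- The normalized two-coordinate potential `Ā(x,y) = A(x,y) + log ψ(x) − log ψ(y) − log λ`. -/
def Abar2 (A : Circ → Circ → ℝ) (ψ : Circ → ℝ) (lam : ℝ) : Circ → Circ → ℝ :=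
  fun x y => A x y + Real.log (ψ x) - Real.log (ψ y) - Real.log lam

open Function (uncurry)

lemma Continuous.integrable_of_compactSpace {X : Type*} [TopologicalSpace X] [CompactSpace X]
    [MeasurableSpace X] [OpensMeasurableSpace X] {μ : Measure X} [IsFiniteMeasure μ]
    {u : X → ℝ} (hu : Continuous u) : Integrable u μ :=
  hu.integrable_of_hasCompactSupport (HasCompactSupport.of_compactSpace u)

lemma abs_sub_integral_le {Y : Type*} [MeasurableSpace Y] {ρ : Measure Y} [IsProbabilityMeasure ρ]
    {v : Y → ℝ} (hv : Integrable v ρ) {c D : ℝ} (h : ∀ y, |c - v y| ≤ D) :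
    |c - ∫ y, v y ∂ρ| ≤ D := by
  have hsub : c - ∫ y, v y ∂ρ = ∫ y, (c - v y) ∂ρ := by
    rw [integral_sub (integrable_const c) hv, integral_const, probReal_univ, one_smul]
  simpa [hsub] using norm_integral_le_of_norm_le_const (μ := ρ) (f := fun y => c - v y)
    (Eventually.of_forall h)

lemma integral_pi_fin_succ_eq_integral_snoc {α : Type*} [MeasurableSpace α] {μ : Measure α}
    [SigmaFinite μ] {N : ℕ} {F : (Fin (N + 1) → α) → ℝ}
    (hF : Integrable F (Measure.pi fun _ => μ)) :
    ∫ τ, F τ ∂(Measure.pi fun _ => μ)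
      = ∫ a, ∫ τ : Fin N → α, F (Fin.snoc τ a) ∂(Measure.pi fun _ => μ) ∂μ := by
  have he := (measurePreserving_piFinSuccAbove (fun _ => μ) (Fin.last N)).symm
  rw [← he.integral_comp', integral_prod]
  · simp only [MeasurableEquiv.piFinSuccAbove_symm_apply, Fin.insertNthEquiv_last]
    rfl
  · exact he.integrable_comp_emb (MeasurableEquiv.measurableEmbedding _) |>.mpr hF

section Doeblin

variable {X : Type*} [MetricSpace X] [CompactSpace X] [MeasurableSpace X] [BorelSpace X]

def kernelOp (μ : Measure X) (k : X → X → ℝ) (u : X → ℝ) (y : X) : ℝ := ∫ x, k x y * u x ∂μ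

variable {μ : Measure X} {k : X → X → ℝ}

lemma continuous_kernelOp [IsFiniteMeasure μ] (hk : Continuous (uncurry k)) {u : X → ℝ}
    (hu : Continuous u) : Continuous (kernelOp μ k u) := by
  have := continuous_parametric_integral_of_continuous (μ := μ)
    (f := fun y x => k x y * u x) ((hk.comp continuous_swap).mul (hu.comp continuous_snd))
    isCompact_univ
  rwa [Measure.restrict_univ] at this

lemma continuous_kernelOp_iterate [IsFiniteMeasure μ] (hk : Continuous (uncurry k)) {u : X → ℝ}
    (hu : Continuous u) (n : ℕ) : Continuous ((kernelOp μ k)^[n] u) := by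
  induction n with
  | zero => exact hu
  | succ n ih => rw [Function.iterate_succ_apply']; exact continuous_kernelOp hk ih

lemma kernelOp_sub_kernelOp_eq_integral [IsProbabilityMeasure μ] (hk : Continuous (uncurry k))
    (hnorm : ∀ y, ∫ x, k x y ∂μ = 1) {u : X → ℝ} (hu : Continuous u) (c : ℝ) (y y' : X) :
    kernelOp μ k u y - kernelOp μ k u y' = ∫ x, (k x y - k x y') * (u x - c) ∂μ := by
  have hk₁ : Continuous (k · y) := hk.comp (continuous_id.prodMk continuous_const)
  have hk₂ : Continuous (k · y') := hk.comp (continuous_id.prodMk continuous_const)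
  have hint : ∀ {v : X → ℝ}, Continuous v → Integrable v μ :=
    fun hv => hv.integrable_of_compactSpace
  have hsplit : ∀ x, (k x y - k x y') * (u x - c)
      = (k x y * u x - k x y' * u x) - (k x y - k x y') * c := fun x => by ring
  simp_rw [hsplit]
  rw [integral_sub (f := fun x => k x y * u x - k x y' * u x) (hint (by fun_prop))
      (hint (by fun_prop)),
    integral_sub (hint (by fun_prop)) (hint (by fun_prop)), integral_mul_const,
    integral_sub (hint hk₁) (hint hk₂), hnorm, hnorm]
  simp [kernelOp]

lemma kernelOp_sub_le [IsProbabilityMeasure μ] (hk : Continuous (uncurry k)) {δ : ℝ}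
    (hδ : ∀ x y, δ ≤ k x y) (hnorm : ∀ y, ∫ x, k x y ∂μ = 1) {u : X → ℝ} (hu : Continuous u)
    {D : ℝ} (hD : ∀ x x', u x - u x' ≤ D) (y y' : X) :
    kernelOp μ k u y - kernelOp μ k u y' ≤ (1 - δ) * D := by
  have : Nonempty X := ⟨y⟩
  obtain ⟨xmin, -, hxmin⟩ := isCompact_univ.exists_isMinOn Set.univ_nonempty hu.continuousOn
  obtain ⟨xmax, -, hxmax⟩ := isCompact_univ.exists_isMaxOn Set.univ_nonempty hu.continuousOn
  set c := (u xmax + u xmin) / 2 with hc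
  have hk₁ : Continuous (k · y) := hk.comp (continuous_id.prodMk continuous_const)
  have hk₂ : Continuous (k · y') := hk.comp (continuous_id.prodMk continuous_const)
  have hint : ∀ {v : X → ℝ}, Continuous v → Integrable v μ :=
    fun hv => hv.integrable_of_compactSpace
  have hmass : ∫ x, ((k x y - δ) + (k x y' - δ)) ∂μ = 2 * (1 - δ) := by
    rw [integral_add (f := fun x => k x y - δ) (hint (by fun_prop)) (hint (by fun_prop)),
      integral_sub (hint hk₁) (integrable_const δ), integral_sub (hint hk₂) (integrable_const δ),
      hnorm, hnorm]
    simp only [integral_const, probReal_univ, smul_eq_mul, one_mul]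
    ring
  have hux : ∀ x, |u x - c| ≤ D / 2 := fun x => by
    have hmin : u xmin ≤ u x := hxmin (Set.mem_univ x)
    have hmax : u x ≤ u xmax := hxmax (Set.mem_univ x)
    have := hD xmax xmin
    rw [abs_le]
    constructor <;> linarith [hc]
  have hkx : ∀ x, |k x y - k x y'| ≤ (k x y - δ) + (k x y' - δ) := fun x => by
    rw [abs_le]; constructor <;> linarith [hδ x y, hδ x y']
  calc kernelOp μ k u y - kernelOp μ k u y' = ∫ x, (k x y - k x y') * (u x - c) ∂μ :=
        kernelOp_sub_kernelOp_eq_integral hk hnorm hu c y y'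
    _ ≤ ∫ x, ((k x y - δ) + (k x y' - δ)) * (D / 2) ∂μ := by
        refine integral_mono (hint (by fun_prop)) (hint (by fun_prop)) fun x => ?_
        calc (k x y - k x y') * (u x - c) ≤ |k x y - k x y'| * |u x - c| := by
              rw [← abs_mul]; exact le_abs_self _
          _ ≤ ((k x y - δ) + (k x y' - δ)) * (D / 2) :=
              mul_le_mul (hkx x) (hux x) (abs_nonneg _) ((abs_nonneg _).trans (hkx x))
    _ = (1 - δ) * D := by rw [integral_mul_const, hmass]; ring

lemma kernelOp_iterate_sub_le [IsProbabilityMeasure μ] (hk : Continuous (uncurry k)) {δ : ℝ}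
    (hδ : ∀ x y, δ ≤ k x y) (hnorm : ∀ y, ∫ x, k x y ∂μ = 1) {u : X → ℝ} (hu : Continuous u)
    {D : ℝ} (hD : ∀ x x', u x - u x' ≤ D) (n : ℕ) (y y' : X) :
    (kernelOp μ k)^[n] u y - (kernelOp μ k)^[n] u y' ≤ (1 - δ) ^ n * D := by
  induction n generalizing y y' with
  | zero => simpa using hD y y'
  | succ n ih =>
    simp only [Function.iterate_succ_apply', pow_succ', mul_assoc]
    exact kernelOp_sub_le hk hδ hnorm (continuous_kernelOp_iterate hk hu n) ih y y'

theorem tendsto_kernelOp_iterate_sub_integral [IsProbabilityMeasure μ]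
    (hk : Continuous (uncurry k)) (hpos : ∀ x y, 0 < k x y) (hnorm : ∀ y, ∫ x, k x y ∂μ = 1)
    {u : X → ℝ} (hu : Continuous u) (ρ : Measure X) [IsProbabilityMeasure ρ] (y : ℕ → X) :
    Tendsto (fun n => (kernelOp μ k)^[n] u (y n) - ∫ x, (kernelOp μ k)^[n] u x ∂ρ) atTop
      (𝓝 0) := by
  have : Nonempty X := ⟨y 0⟩
  obtain ⟨p, -, hp⟩ := isCompact_univ.exists_isMinOn Set.univ_nonempty hk.continuousOn
  set δ := uncurry k p
  have hδ0 : 0 < δ := hpos p.1 p.2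
  have hδ : ∀ x y, δ ≤ k x y := fun x y => hp (Set.mem_univ (x, y))
  have hδ1 : δ ≤ 1 := by
    simpa [hnorm] using integral_mono (μ := μ) (integrable_const δ)
      (hk.comp (continuous_id.prodMk continuous_const)).integrable_of_compactSpace
      (fun x => hδ x (y 0))
  obtain ⟨C, hC⟩ := isCompact_univ.exists_bound_of_continuousOn hu.continuousOn
  have hD : ∀ x x', u x - u x' ≤ 2 * C := fun x x' => by
    have h := hC x (Set.mem_univ x); have h' := hC x' (Set.mem_univ x')
    rw [Real.norm_eq_abs, abs_le] at h h'
    linarith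
  have hbound : ∀ n, |(kernelOp μ k)^[n] u (y n) - ∫ x, (kernelOp μ k)^[n] u x ∂ρ|
      ≤ (1 - δ) ^ n * (2 * C) := fun n => by
    have hle := kernelOp_iterate_sub_le hk hδ hnorm hu hD n
    exact abs_sub_integral_le
      (continuous_kernelOp_iterate (μ := μ) hk hu n).integrable_of_compactSpace
      fun x => abs_sub_le_iff.mpr ⟨hle _ _, hle _ _⟩
  refine squeeze_zero_norm hbound ?_
  have hgeom : Tendsto (fun n : ℕ => (1 - δ) ^ n) atTop (𝓝 0) :=
    tendsto_pow_atTop_nhds_zero_of_lt_one (by linarith) (by linarith)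
  simpa using hgeom.mul_const (2 * C)

end Doeblin

section Chains

variable {α : Type*} {N : ℕ}

def prependTuple (τ : Fin N → α) (x : ℕ → α) : ℕ → α :=
  fun i => if h : i < N then τ ⟨i, h⟩ else x (i - N)

def chainEnergy (W : α → α → ℝ) (N : ℕ) (z : ℕ → α) : ℝ :=
  ∑ k ∈ Finset.range N, W (z k) (z (k + 1))

@[simp]
lemma prependTuple_fin_zero (τ : Fin 0 → α) (x : ℕ → α) : prependTuple τ x = x := by
  funext i; simp [prependTuple]

lemma prependTuple_apply_of_lt (τ : Fin (N + 1) → α) (x : ℕ → α) {i : ℕ} (hi : i < N + 1) :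
    prependTuple τ x i = τ i := by
  rw [prependTuple, dif_pos hi, Fin.natCast_eq_mk hi]

lemma prependTuple_add (τ : Fin N → α) (x : ℕ → α) (i : ℕ) : prependTuple τ x (N + i) = x i := by
  simp [prependTuple]

lemma prependTuple_self (τ : Fin N → α) (x : ℕ → α) : prependTuple τ x N = x 0 := by
  simpa using prependTuple_add τ x 0

lemma prependTuple_apply_congr (τ : Fin N → α) {x y : ℕ → α} (hxy : x 0 = y 0) {i : ℕ}
    (hi : i ≤ N) : prependTuple τ x i = prependTuple τ y i := by
  unfold prependTuple
  split_ifs with h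
  · rfl
  · rw [show i - N = 0 by omega, hxy]

lemma continuous_prependTuple [TopologicalSpace α] (x : ℕ → α) :
    Continuous fun τ : Fin N → α => prependTuple τ x := by
  refine continuous_pi fun i => ?_
  unfold prependTuple
  split_ifs
  exacts [continuous_apply _, continuous_const]

lemma continuous_chainEnergy [TopologicalSpace α] {W : α → α → ℝ} (hW : Continuous (uncurry W)) :
    Continuous (chainEnergy W N) :=
  continuous_finsetSum _ fun k _ => hW.comp₂ (continuous_apply k) (continuous_apply (k + 1))

lemma chainEnergy_succ (W : α → α → ℝ) (z : ℕ → α) :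
    chainEnergy W (N + 1) z = chainEnergy W N z + W (z N) (z (N + 1)) :=
  Finset.sum_range_succ _ _

lemma chainEnergy_congr (W : α → α → ℝ) {z z' : ℕ → α} (h : ∀ i ≤ N, z i = z' i) :
    chainEnergy W N z = chainEnergy W N z' :=
  Finset.sum_congr rfl fun k hk => by
    have := Finset.mem_range.mp hk
    rw [h k (by omega), h (k + 1) (by omega)]

end Chains

instance : IsProbabilityMeasure haarC := by unfold haarC; infer_instance

@[simp] lemma cons_zero (a : Circ) (x : Bs) : cons a x 0 = a := rfl

@[simp] lemma cons_succ (a : Circ) (x : Bs) (n : ℕ) : cons a x (n + 1) = x n := rfl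

lemma continuous_cons : Continuous fun p : Circ × Bs => cons p.1 p.2 := by
  refine continuous_pi fun n => ?_
  rcases n with _ | n
  exacts [continuous_fst, (continuous_apply n).comp continuous_snd]

lemma continuous_ruelle {A : Bs → ℝ} (hA : Continuous A) {φ : Bs → ℝ} (hφ : Continuous φ) :
    Continuous (Ruelle A φ) := by
  have hcons : Continuous fun p : Bs × Circ => cons p.2 p.1 := continuous_cons.comp continuous_swap
  have := continuous_parametric_integral_of_continuous (μ := haarC)
    (f := fun x a => Real.exp (A (cons a x)) * φ (cons a x))
    ((Real.continuous_exp.comp (hA.comp hcons)).mul (hφ.comp hcons)) isCompact_univ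
  rwa [Measure.restrict_univ] at this

lemma continuous_ruelle_iterate {A : Bs → ℝ} (hA : Continuous A) {φ : Bs → ℝ}
    (hφ : Continuous φ) (n : ℕ) : Continuous ((Ruelle A)^[n] φ) := by
  induction n with
  | zero => exact hφ
  | succ n ih => rw [Function.iterate_succ_apply']; exact continuous_ruelle hA ih

lemma FixedDual.integral_ruelle_iterate {A : Bs → ℝ} {m : Measure Bs} (hfix : FixedDual A m)
    (hA : Continuous A) {φ : Bs → ℝ} (hφ : Continuous φ) (n : ℕ) :
    ∫ x, (Ruelle A)^[n] φ x ∂m = ∫ x, φ x ∂m := by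
  induction n with
  | zero => rfl
  | succ n ih =>
    have hcont := continuous_ruelle_iterate hA hφ n
    obtain ⟨C, hC⟩ := isCompact_univ.exists_bound_of_continuousOn hcont.continuousOn
    rw [Function.iterate_succ_apply', hfix _ hcont ⟨C, fun x => hC x (Set.mem_univ x)⟩, ih]

lemma prependTuple_snoc {N : ℕ} (τ : Fin N → Circ) (a : Circ) (x : Bs) :
    prependTuple (Fin.snoc τ a : Fin (N + 1) → Circ) x = prependTuple τ (cons a x) := by
  funext i
  unfold prependTuple
  rcases lt_trichotomy i N with h | rfl | h
  · rw [dif_pos (by omega), dif_pos h]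
    exact Fin.snoc_castSucc (α := fun _ => Circ) a τ ⟨i, h⟩
  · rw [dif_pos (by omega), dif_neg (lt_irrefl _), Nat.sub_self]
    exact Fin.snoc_last (α := fun _ => Circ) a τ
  · rw [dif_neg (by omega), dif_neg (by omega), show i - N = i - (N + 1) + 1 by omega]
    rfl

section TwoCoordinatePotential

variable {W : Circ → Circ → ℝ}

local notation "𝓛" => Ruelle fun z => W (z 0) (z 1)

local notation "𝓣" => kernelOp haarC fun a b => Real.exp (W a b)

theorem ruelle_iterate_apply (hW : Continuous (uncurry W)) {g : Bs → ℝ} (hg : Continuous g)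
    (N : ℕ) (x : Bs) :
    𝓛^[N] g x = ∫ τ : Fin N → Circ,
      Real.exp (chainEnergy W N (prependTuple τ x)) * g (prependTuple τ x)
        ∂Measure.pi fun _ => haarC := by
  induction N generalizing x with
  | zero => simp [chainEnergy]
  | succ N ih =>
    have hcont : Continuous fun τ : Fin (N + 1) → Circ =>
        Real.exp (chainEnergy W (N + 1) (prependTuple τ x)) * g (prependTuple τ x) :=
      (Real.continuous_exp.comp ((continuous_chainEnergy hW).comp (continuous_prependTuple x))).mul
        (hg.comp (continuous_prependTuple x))
    -- the site added by the outermost `𝓛` becomes the last coordinate of the tuple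
    rw [Function.iterate_succ_apply',
      integral_pi_fin_succ_eq_integral_snoc hcont.integrable_of_compactSpace]
    refine integral_congr_ae (Eventually.of_forall fun a => ?_)
    simp only [prependTuple_snoc, chainEnergy_succ, Real.exp_add, prependTuple_self,
      prependTuple_add, cons_zero, cons_succ]
    rw [ih, ← integral_const_mul]
    congr 1
    funext τ
    ring

theorem ruelle_iterate_apply_congr (hW : Continuous (uncurry W)) {g : Bs → ℝ} (hg : Continuous g)
    {N : ℕ} (hgN : DependsOn g (Set.Iio N)) {x y : Bs} (hxy : x 0 = y 0) :
    𝓛^[N] g x = 𝓛^[N] g y := by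
  simp only [ruelle_iterate_apply hW hg]
  congr 1
  funext τ
  have h : ∀ i ≤ N, prependTuple τ x i = prependTuple τ y i :=
    fun i hi => prependTuple_apply_congr τ hxy hi
  rw [chainEnergy_congr W h, hgN fun i hi => h i (Set.mem_Iio.mp hi).le]

lemma ruelle_iterate_comp_eval_zero (u : Circ → ℝ) (n : ℕ) :
    𝓛^[n] (fun x => u (x 0)) = fun x => 𝓣^[n] u (x 0) := by
  induction n with
  | zero => rfl
  | succ n ih => rw [Function.iterate_succ_apply', ih, Function.iterate_succ_apply']; rfl

lemma integral_finiteVolume_eq_ruelle_iterate (hW : Continuous (uncurry W)) {r : ℕ}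
    {f : (Fin (r + 1) → Circ) → ℝ} (hf : Continuous f) {N : ℕ} (hrN : r ≤ N) (b : Circ) :
    ∫ τ : Fin (N + 1) → Circ,
        f (fun i => τ ((i : ℕ) : Fin (N + 1))) *
          Real.exp ((∑ k ∈ Finset.range N,
            W (τ ((k : ℕ) : Fin (N + 1))) (τ ((k + 1 : ℕ) : Fin (N + 1))))
            + W (τ ((N : ℕ) : Fin (N + 1))) b)
        ∂(Measure.pi fun _ => haarC)
      = 𝓛^[N + 1] (fun x => f fun i => x i) fun _ => b := by
  have hg : Continuous fun x : Bs => f fun i => x i :=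
    hf.comp (continuous_pi fun i => continuous_apply _)
  rw [ruelle_iterate_apply hW hg]
  refine integral_congr_ae (Eventually.of_forall fun τ => ?_)
  have hτ : ∀ i ≤ N, prependTuple τ (fun _ => b) i = τ i :=
    fun i hi => prependTuple_apply_of_lt τ _ (by omega)
  have hE : chainEnergy W (N + 1) (prependTuple τ fun _ => b)
      = (∑ k ∈ Finset.range N, W (τ ((k : ℕ) : Fin (N + 1))) (τ ((k + 1 : ℕ) : Fin (N + 1))))
        + W (τ ((N : ℕ) : Fin (N + 1))) b := by
    rw [chainEnergy_succ, prependTuple_self, hτ N le_rfl]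
    congr 1
    exact Finset.sum_congr rfl fun k hk => by
      rw [hτ k (Finset.mem_range.mp hk).le, hτ (k + 1) (Finset.mem_range.mp hk)]
  have hargs : (fun i : Fin (r + 1) => prependTuple τ (fun _ => b) i)
      = fun i : Fin (r + 1) => τ ((i : ℕ) : Fin (N + 1)) :=
    funext fun i => hτ i (by have := i.isLt; omega)
  dsimp only
  rw [hE, hargs, mul_comm]

lemma ruelle_iterate_add_eq_kernelOp_iterate (hW : Continuous (uncurry W)) {g : Bs → ℝ}
    (hg : Continuous g) {N : ℕ} (hgN : DependsOn g (Set.Iio N)) (n : ℕ) :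
    𝓛^[n + N] g = fun x => 𝓣^[n] (fun b => 𝓛^[N] g fun _ => b) (x 0) := by
  have hdep : 𝓛^[N] g
      = fun x => 𝓛^[N] g fun _ => x 0 :=
    funext fun x => ruelle_iterate_apply_congr hW hg hgN rfl
  rw [Function.iterate_add_apply]
  conv_lhs => rw [hdep]
  exact ruelle_iterate_comp_eval_zero (fun b => 𝓛^[N] g fun _ => b) n

theorem tendsto_ruelle_iterate_add (hW : Continuous (uncurry W))
    (hnorm : ∀ y, ∫ x, Real.exp (W x y) ∂haarC = 1) {m : Measure Bs} [IsProbabilityMeasure m]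
    (hfix : FixedDual (fun z => W (z 0) (z 1)) m) {g : Bs → ℝ} (hg : Continuous g) {N : ℕ}
    (hgN : DependsOn g (Set.Iio N)) (x : ℕ → Bs) :
    Tendsto (fun n => 𝓛^[n + N] g (x n)) atTop (𝓝 (∫ z, g z ∂m)) := by
  have hW₂ : Continuous fun z : Bs => W (z 0) (z 1) :=
    hW.comp₂ (continuous_apply 0) (continuous_apply 1)
  have hk : Continuous (uncurry fun a b => Real.exp (W a b)) := Real.continuous_exp.comp hW
  set u : Circ → ℝ := fun b => 𝓛^[N] g fun _ => b
  have hu : Continuous u :=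
    (continuous_ruelle_iterate hW₂ hg N).comp (continuous_pi fun _ => continuous_id)
  have hLu : ∀ n, 𝓛^[n + N] g = fun z => 𝓣^[n] u (z 0) :=
    ruelle_iterate_add_eq_kernelOp_iterate hW hg hgN
  have : IsProbabilityMeasure (m.map (· 0)) :=
    Measure.isProbabilityMeasure_map (measurable_pi_apply 0).aemeasurable
  have hmean : ∀ n, ∫ b, 𝓣^[n] u b ∂(m.map (· 0)) = ∫ z, g z ∂m := fun n => by
    rw [integral_map (measurable_pi_apply 0).aemeasurable
      (continuous_kernelOp_iterate hk hu n).aestronglyMeasurable,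
      ← hfix.integral_ruelle_iterate hW₂ hg (n + N), hLu n]
  have hconv : Tendsto (fun n => 𝓣^[n] u (x n 0) - ∫ b, 𝓣^[n] u b ∂(m.map (· 0))) atTop (𝓝 0) :=
    tendsto_kernelOp_iterate_sub_integral hk (fun a b => Real.exp_pos (W a b)) hnorm hu _ _
  simp only [hmean] at hconv
  simpa [hLu] using hconv.add_const (∫ z, g z ∂m)

end TwoCoordinatePotential

lemma continuous_of_abs_sub_le_mul_dist_rpow {Y : Type*} [PseudoMetricSpace Y] {F : Y → ℝ}
    {H α : ℝ} (hα : 0 < α) (hF : ∀ p q, |F p - F q| ≤ H * dist p q ^ α) : Continuous F := by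
  refine continuous_iff_continuousAt.mpr fun q => ?_
  rw [ContinuousAt, tendsto_iff_dist_tendsto_zero]
  have hlim : Tendsto (fun p => |H| * dist p q ^ α) (𝓝 q) (𝓝 0) := by
    simpa [Real.zero_rpow hα.ne'] using
      ((tendsto_iff_dist_tendsto_zero.mp tendsto_id).rpow_const (Or.inr hα.le)).const_mul |H|
  refine squeeze_zero (fun p => dist_nonneg) (fun p => ?_) hlim
  rw [Real.dist_eq]
  exact (hF p q).trans (mul_le_mul_of_nonneg_right (le_abs_self H) (by positivity))

lemma continuous_abar2 {A : Circ → Circ → ℝ} (hA : Continuous (uncurry A)) {ψ : Circ → ℝ}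
    (hψ : Continuous ψ) (hψpos : ∀ x, 0 < ψ x) (lam : ℝ) :
    Continuous (uncurry (Abar2 A ψ lam)) := by
  have hlog : Continuous fun x => Real.log (ψ x) := hψ.log fun x => (hψpos x).ne'
  exact ((hA.add (hlog.comp continuous_fst)).sub (hlog.comp continuous_snd)).sub continuous_const

lemma integral_exp_abar2 {A : Circ → Circ → ℝ} {ψ : Circ → ℝ} (hψpos : ∀ x, 0 < ψ x) {lam : ℝ}
    (hlam : 0 < lam) (heig : ∀ y, ∫ x, Real.exp (A x y) * ψ x ∂haarC = lam * ψ y) (y : Circ) :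
    ∫ x, Real.exp (Abar2 A ψ lam x y) ∂haarC = 1 := by
  have hexp : ∀ x, Real.exp (Abar2 A ψ lam x y) = Real.exp (A x y) * ψ x / ψ y / lam := fun x => by
    rw [Abar2, Real.exp_sub, Real.exp_sub, Real.exp_add, Real.exp_log (hψpos x),
      Real.exp_log (hψpos y), Real.exp_log hlam]
  simp_rw [hexp]
  rw [integral_div, integral_div, heig y, mul_div_assoc, div_self (hψpos y).ne', mul_one,
    div_self hlam.ne']

theorem dlr_finite_volume_tendsto_gibbs_general (α H : ℝ) (hα0 : 0 < α)
    (A : Circ → Circ → ℝ)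
    (hA : ∀ x y x' y', |A x y - A x' y'| ≤ H * (max (dist x x') (dist y y')) ^ α)
    (lam : ℝ) (hlam : 0 < lam)
    (ψ : Circ → ℝ) (hψc : Continuous ψ) (hψpos : ∀ x, 0 < ψ x)
    (heig : ∀ y, ∫ x, Real.exp (A x y) * ψ x ∂haarC = lam * ψ y)
    (m : Measure Bs) (hm : IsProbabilityMeasure m)
    (hfix : FixedDual (fun x => Abar2 A ψ lam (x 0) (x 1)) m)
    (r : ℕ) (f : (Fin (r + 1) → Circ) → ℝ) (hf : Continuous f) (σ' : Bs) :
    Tendsto (fun n : ℕ =>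
      ∫ τ : Fin (n + r + 1) → Circ,
        f (fun i => τ ((i : ℕ) : Fin (n + r + 1))) *
          Real.exp ((∑ k ∈ Finset.range (n + r),
            Abar2 A ψ lam (τ ((k : ℕ) : Fin (n + r + 1))) (τ ((k + 1 : ℕ) : Fin (n + r + 1))))
            + Abar2 A ψ lam (τ (((n + r : ℕ)) : Fin (n + r + 1))) (σ' (n + r + 1)))
        ∂(Measure.pi fun _ => haarC))
      atTop (𝓝 (∫ x, f (fun i => x (i : ℕ)) ∂m)) := by
  set W := Abar2 A ψ lam
  have hW : Continuous (uncurry W) := continuous_abar2 (continuous_of_abs_sub_le_mul_dist_rpow hα0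
    fun p q => by rw [Prod.dist_eq]; exact hA p.1 p.2 q.1 q.2) hψc hψpos lam
  have hg : Continuous fun x : Bs => f fun i => x i :=
    hf.comp (continuous_pi fun i => continuous_apply _)
  have hg_dep : DependsOn (fun x : Bs => f fun i => x i) (Set.Iio (r + 1)) :=
    fun x y h => congrArg f (funext fun i => h i (Set.mem_Iio.mpr i.isLt))
  refine (tendsto_ruelle_iterate_add hW (integral_exp_abar2 hψpos hlam heig) hfix hg hg_dep
    fun n _ => σ' (n + r + 1)).congr fun n => ?_
  rw [integral_finiteVolume_eq_ruelle_iterate hW hf (Nat.le_add_left r n), add_assoc]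

/-- for a Hölder two-coordinate potential, the finite-volume DLR
expectations with right boundary condition `σ'` converge, as the volume grows,
to the expectation under the Gibbs state `m`; in particular the limit does not
depend on the boundary condition. (The volume is indexed by `N = n + r + 1`.) -/
theorem dlr_finite_volume_tendsto_gibbs (α H : ℝ) (hα0 : 0 < α) (hα1 : α ≤ 1)
    (A : Circ → Circ → ℝ)
    (hA : ∀ x y x' y', |A x y - A x' y'| ≤ H * (max (dist x x') (dist y y')) ^ α)
    (lam : ℝ) (hlam : 0 < lam)
    (ψ : Circ → ℝ) (hψc : Continuous ψ) (hψpos : ∀ x, 0 < ψ x)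
    (heig : ∀ y, ∫ x, Real.exp (A x y) * ψ x ∂haarC = lam * ψ y)
    (m : Measure Bs) (hm : IsProbabilityMeasure m)
    (hfix : FixedDual (fun x => Abar2 A ψ lam (x 0) (x 1)) m)
    (hmuniq : ∀ m' : Measure Bs, IsProbabilityMeasure m' →
      FixedDual (fun x => Abar2 A ψ lam (x 0) (x 1)) m' → m' = m)
    (r : ℕ) (f : (Fin (r + 1) → Circ) → ℝ) (hf : Continuous f) (σ' : Bs) :
    Tendsto (fun n : ℕ =>
      ∫ τ : Fin (n + r + 1) → Circ,
        f (fun i => τ ((i : ℕ) : Fin (n + r + 1))) *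
          Real.exp ((∑ k ∈ Finset.range (n + r),
            Abar2 A ψ lam (τ ((k : ℕ) : Fin (n + r + 1))) (τ ((k + 1 : ℕ) : Fin (n + r + 1))))
            + Abar2 A ψ lam (τ (((n + r : ℕ)) : Fin (n + r + 1))) (σ' (n + r + 1)))
        ∂(Measure.pi fun _ => haarC))
      atTop (𝓝 (∫ x, f (fun i => x (i : ℕ)) ∂m)) :=
  dlr_finite_volume_tendsto_gibbs_general α H hα0 A hA lam hlam ψ hψc hψpos heig m hm hfix r f hf σ'
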